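/- arXiv:2102.01789 — 14 statements merged into one kernel-verified Lean document; each statement's English description precedes it below -/
import Mathlib

section
/- Let (S,+) be a commutative semigroup, K a quadratically closed commutative field of characteristic different from 2, and σ, τ : S → S two involutions. A function f : S² → K satisfies the d'Alembert type functional equation f(x+y, z+w) + f(x+σ(y), z+τ(w)) = 2 f(x,z) f(y,w) for all x, y, z, w ∈ S if and only if there exists a multiplicative function χ : S² → K such that f(x,y) = (χ(x,y) + χ(σ(x), τ(y)))/2 for all x, y ∈ S. -/
theorem dal_aux {T K : Type*} [AddCommSemigroup T] [Field K]
    (hK2 : (2 : K) ≠ 0) (hKsq : ∀ k : K, IsSquare k)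
    (ρ : T → T) (hρinv : ∀ u, ρ (ρ u) = u) (hρadd : ∀ u v, ρ (u + v) = ρ u + ρ v)
    (g : T → K) (hg : ∀ u v, g (u + v) + g (u + ρ v) = 2 * g u * g v) :
    ∃ χ : T → K, (∀ u v, χ (u + v) = χ u * χ v) ∧ (∀ u, g u = (χ u + χ (ρ u)) / 2) := by
  by_cases hz : ∀ u, g u = 0
  · refine ⟨fun _ => 0, by intro u v; ring, fun u => by rw [hz u]; ring⟩
  push_neg at hz
  obtain ⟨a, ha⟩ := hz
  have hfρ : ∀ u, g (ρ u) = g u := by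
    intro u
    have h1 := hg a u
    have h2 := hg a (ρ u)
    rw [hρinv] at h2
    have h3 : 2 * g a * g (ρ u) = 2 * g a * g u := by linear_combination h1 - h2
    exact mul_left_cancel₀ (mul_ne_zero hK2 ha) h3
  obtain ⟨d, hd⟩ : ∃ d : T → T → K, ∀ u v, d u v = g (u + v) - g u * g v :=
    ⟨_, fun _ _ => rfl⟩
  have hd1 : ∀ u v, g (u + v) = g u * g v + d u v := by
    intro u v; rw [hd]; ring
  have hds : ∀ u v, d u v = d v u := by
    intro u v; rw [hd, hd, add_comm, mul_comm]
  have hgρ2 : ∀ u v, g (u + ρ v) = g u * g v - d u v := by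
    intro u v; have h := hg u v; rw [hd]; linear_combination h
  have hdρ : ∀ u v, d u (ρ v) = - d u v := by
    intro u v
    rw [hd, hgρ2, hfρ, hd]; ring
  have hAssoc : ∀ u v w, d u v * g w + d (u + v) w = g u * d v w + d u (v + w) := by
    intro u v w; rw [hd, hd, hd, hd, add_assoc]; ring
  have hB : ∀ u v w, d u (v + w) + d u (v + ρ w) = 2 * d u v * g w := by
    intro u v w
    have h1 := hAssoc u v w
    have h2 := hAssoc u v (ρ w)
    rw [hfρ, hdρ, hdρ] at h2
    linear_combination - h1 - h2
  have hI : ∀ u v w, d u (v + w) - d u (ρ v + w) = 2 * g w * d u v := by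
    intro u v w
    have h := hB u v w
    have he : v + ρ w = ρ (ρ v + w) := by rw [hρadd, hρinv]
    rw [he, hdρ] at h
    linear_combination h
  have hSine : ∀ u v w, d u (v + w) = g v * d u w + g w * d u v := by
    intro u v w
    have h1 := hI u v w
    have h2 := hI u w v
    have he : ρ w + v = ρ (ρ v + w) := by
      rw [hρadd, hρinv]; exact add_comm _ _
    rw [add_comm w v, he, hdρ] at h2
    have h3 : 2 * d u (v + w) = 2 * (g v * d u w + g w * d u v) := by
      linear_combination h1 + h2
    exact mul_left_cancel₀ hK2 h3
  have hSine' : ∀ u v w, d (u + v) w = g u * d v w + g v * d u w := by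
    intro u v w
    rw [hds, hSine, hds w u, hds w v]
  have hRank : ∀ u v w t, d u v * d w t = d u w * d v t := by
    intro u v w t
    have hadd : (u + v) + (w + t) = (u + w) + (v + t) := add_add_add_comm u v w t
    have e1 : g ((u + v) + (w + t)) = g (u + v) * g (w + t) + d (u + v) (w + t) := hd1 _ _
    have e2 : g ((u + w) + (v + t)) = g (u + w) * g (v + t) + d (u + w) (v + t) := hd1 _ _
    rw [hadd, e2] at e1
    rw [hSine' u w (v + t), hSine' u v (w + t), hSine w v t, hSine u v t,
      hSine v w t, hSine u w t, hd1 u w, hd1 v t, hd1 u v, hd1 w t] at e1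
    linear_combination - e1 - g u * g t * hds v w
  by_cases hd0 : ∀ u v, d u v = 0
  · refine ⟨g, fun u v => by rw [hd1, hd0]; ring, fun u => by rw [hfρ]; field_simp; ring⟩
  push_neg at hd0
  obtain ⟨p, q, hpq⟩ := hd0
  have hpp : d p p ≠ 0 := by
    intro h0
    have h2 := hRank p q p q
    rw [h0, zero_mul] at h2
    exact hpq (mul_self_eq_zero.mp h2)
  obtain ⟨r, hr⟩ := hKsq (d p p)
  have hr0 : r ≠ 0 := by
    intro h0; rw [h0, mul_zero] at hr; exact hpp hr
  refine ⟨fun u => g u + d u p / r, ?_, ?_⟩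
  · intro u v
    have hrk : d u p * d v p = d u v * d p p := hRank u p v p
    show g (u + v) + d (u + v) p / r = (g u + d u p / r) * (g v + d v p / r)
    rw [hd1, hSine']
    field_simp
    linear_combination (-d u v) * hr - hrk
  · intro u
    have h1 : d (ρ u) p = - d u p := by
      rw [hds, hdρ, hds]
    show g u = (g u + d u p / r + ((fun u => g u + d u p / r) (ρ u))) / 2
    simp only
    rw [hfρ, h1]
    field_simp
    ring

/-- d'Alembert type equation on a commutative semigroup with two
involutions, valued in a quadratically closed field of characteristic ≠ 2. -/
theorem dalembert_type_general_solution
    {S K : Type*} [AddCommSemigroup S] [Field K]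
    (hK2 : (2 : K) ≠ 0) (hKsq : ∀ k : K, IsSquare k)
    (σ τ : S → S)
    (hσinv : ∀ x, σ (σ x) = x) (hσadd : ∀ x y, σ (x + y) = σ x + σ y)
    (hτinv : ∀ x, τ (τ x) = x) (hτadd : ∀ x y, τ (x + y) = τ x + τ y)
    (f : S → S → K) :
    (∀ x y z w, f (x + y) (z + w) + f (x + σ y) (z + τ w) = 2 * f x z * f y w) ↔
    ∃ χ : S → S → K,
      (∀ x y z w, χ (x + y) (z + w) = χ x z * χ y w) ∧
      (∀ x y, f x y = (χ x y + χ (σ x) (τ y)) / 2) := by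
  constructor
  · intro h
    obtain ⟨χ', hχm, hχf⟩ := dal_aux (T := S × S) hK2 hKsq
      (fun p => (σ p.1, τ p.2))
      (fun p => by simp [hσinv, hτinv])
      (fun p q => by simp [Prod.ext_iff, hσadd, hτadd])
      (fun p => f p.1 p.2)
      (fun u v => h u.1 v.1 u.2 v.2)
    exact ⟨fun x z => χ' (x, z), fun x y z w => hχm (x, z) (y, w), fun x y => hχf (x, y)⟩
  · rintro ⟨χ, hm, hf⟩ x y z w
    simp only [hf]
    rw [hσadd, hτadd, hσadd x (σ y), hσinv, hτadd z (τ w), hτinv]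
    rw [hm, hm, hm, hm]
    field_simp
    ring
end

section
/- Let (S,+) be a commutative semigroup, K a field of characteristic different from 2, and σ, τ : S → S two involutions. If f : S² → K satisfies f(x+y, z+w) + f(x+σ(y), z+τ(w)) = 2 f(x,z) f(y,w) for all x, y, z, w ∈ S, and f is not identically zero, then f(σ(y), τ(w)) = f(y,w) for all y, w ∈ S. -/
/-- a nonzero solution of the d'Alembert type equation is
invariant under the pair of involutions. -/
theorem dalembert_type_involution_invariant
    {S K : Type*} [AddCommSemigroup S] [Field K]
    (hK2 : (2 : K) ≠ 0)
    (σ τ : S → S)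
    (hσinv : ∀ x, σ (σ x) = x) (hσadd : ∀ x y, σ (x + y) = σ x + σ y)
    (hτinv : ∀ x, τ (τ x) = x) (hτadd : ∀ x y, τ (x + y) = τ x + τ y)
    (f : S → S → K)
    (hf : ∀ x y z w, f (x + y) (z + w) + f (x + σ y) (z + τ w) = 2 * f x z * f y w)
    (hne : ¬ ∀ x z, f x z = 0) :
    ∀ y w, f (σ y) (τ w) = f y w := by
  push_neg at hne
  obtain ⟨x, z, hxz⟩ := hne
  intro y w
  have h1 := hf x y z w
  have h2 := hf x (σ y) z (τ w)
  rw [hσinv, hτinv] at h2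
  have : 2 * f x z * f (σ y) (τ w) = 2 * f x z * f y w := by
    rw [← h1, ← h2]; ring
  exact mul_left_cancel₀ (mul_ne_zero hK2 hxz) this
end

section
/- Let (S,+) be a commutative semigroup, K a quadratically closed commutative field of characteristic different from 2, and σ : S → S an involution. A function g : S → K satisfies g(x+y) + g(x+σ(y)) = 2 g(x) g(y) for all x, y ∈ S if and only if there exists a multiplicative function m : S → K such that g(x) = (m(x) + m(σ(x)))/2 for all x ∈ S. -/
/-- the classical d'Alembert equation with one involution on a
commutative semigroup, valued in a quadratically closed field of char ≠ 2. -/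
theorem dalembert_one_variable_general_solution
    {S K : Type*} [AddCommSemigroup S] [Field K]
    (hK2 : (2 : K) ≠ 0) (hKsq : ∀ k : K, IsSquare k)
    (σ : S → S)
    (hσinv : ∀ x, σ (σ x) = x) (hσadd : ∀ x y, σ (x + y) = σ x + σ y)
    (g : S → K) :
    (∀ x y, g (x + y) + g (x + σ y) = 2 * g x * g y) ↔
    ∃ m : S → K, (∀ x y, m (x + y) = m x * m y) ∧
      (∀ x, g x = (m x + m (σ x)) / 2) := by
  constructor
  · intro hE
    -- star identity
    have hstar : ∀ x y, g (σ x + y) = g (x + σ y) := by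
      intro x y
      have h1 := hE x y
      have h2 := hE y x
      have c1 : g (y + x) = g (x + y) := congrArg g (add_comm _ _)
      have c2 : g (σ x + y) = g (y + σ x) := congrArg g (add_comm _ _)
      linear_combination -h1 + h2 - c1 + c2
    -- Kannappan identity
    have hK : ∀ x y a, g (x + y + a) =
        g y * g (x + a) + g x * g (y + a) + g a * g (x + y) - 2 * (g x * g y * g a) := by
      intro x y a
      have h4 := hE (x + σ y) a
      have h5 := hE x (y + a)
      have h6 := hE (x + a) y
      have h7 := hE x y
      have c1 : (x + σ y) + σ a = x + σ (y + a) := by rw [hσadd]; ac_rfl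
      have c2 : (x + a) + σ y = (x + σ y) + a := by ac_rfl
      have c3 : (x + a) + y = (x + y) + a := by ac_rfl
      have c4 : x + (y + a) = (x + y) + a := by ac_rfl
      rw [c1] at h4
      rw [c2, c3] at h6
      rw [c4] at h5
      refine mul_left_cancel₀ hK2 ?_
      linear_combination h6 + h5 - h4 - 2 * g a * h7
    -- rank one identity
    have hrank : ∀ x y z w, (g (x + y) - g x * g y) * (g (z + w) - g z * g w) =
        (g (x + w) - g x * g w) * (g (z + y) - g z * g y) := by
      intro x y z w
      have r1 := hE (x + y) (z + w)
      have r2 := hE (x + w) (z + y)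
      have r3 := hE ((x + σ z) + y) w
      have r4 := hE ((x + σ z) + w) y
      have r5 := hE (x + y) z
      have r6 := hE (x + w) z
      have K1 := hK x y z
      have K2 := hK x w z
      have c5 : (x + w) + (z + y) = (x + y) + (z + w) := by ac_rfl
      have c6 : (x + y) + σ (z + w) = ((x + σ z) + y) + σ w := by rw [hσadd]; ac_rfl
      have c7 : (x + w) + σ (z + y) = ((x + σ z) + w) + σ y := by rw [hσadd]; ac_rfl
      have c8 : ((x + σ z) + w) + y = ((x + σ z) + y) + w := by ac_rfl
      have c9 : (x + y) + σ z = (x + σ z) + y := by ac_rfl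
      have c10 : (x + w) + σ z = (x + σ z) + w := by ac_rfl
      have c11 : g (y + z) = g (z + y) := congrArg g (add_comm _ _)
      have c12 : g (w + z) = g (z + w) := congrArg g (add_comm _ _)
      rw [c6] at r1
      rw [c5, c7] at r2
      rw [c8] at r4
      rw [c9] at r5
      rw [c10] at r6
      rw [c11] at K1
      rw [c12] at K2
      refine mul_left_cancel₀ hK2 ?_
      linear_combination (- r1 + r2 + r3 - r4) + 2 * g w * r5 - 2 * g y * r6
        - 2 * g w * K1 + 2 * g y * K2
    by_cases hg0 : ∀ x, g x = 0
    · exact ⟨fun _ => 0, by simp, fun x => by simp [hg0]⟩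
    · push_neg at hg0
      obtain ⟨x0, hx0⟩ := hg0
      -- g ∘ σ = g
      have hgσ : ∀ y, g (σ y) = g y := by
        intro y
        have h1 := hE x0 (σ y)
        rw [hσinv] at h1
        have h2 := hE x0 y
        have h3 : 2 * g x0 * g (σ y) = 2 * g x0 * g y := by linear_combination h2 - h1
        exact mul_left_cancel₀ (mul_ne_zero hK2 hx0) h3
      by_cases hmul : ∀ x y, g (x + y) = g x * g y
      · refine ⟨g, hmul, fun x => ?_⟩
        rw [hgσ, eq_div_iff hK2]; ring
      · push_neg at hmul
        obtain ⟨a0, b0, hab⟩ := hmul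
        have hab' : g (a0 + b0) - g a0 * g b0 ≠ 0 := sub_ne_zero.mpr hab
        have csym : g (b0 + a0) = g (a0 + b0) := congrArg g (add_comm _ _)
        have hne : (g (a0 + b0) - g a0 * g b0) * (g (b0 + a0) - g b0 * g a0) ≠ 0 := by
          rw [csym]
          exact mul_ne_zero hab' (sub_ne_zero.mpr (by rw [mul_comm]; exact hab))
        have haa0 : g (a0 + a0) - g a0 * g a0 ≠ 0 := by
          intro h0
          exact hne (by rw [← hrank a0 a0 b0 b0, h0, zero_mul])
        obtain ⟨c, hc⟩ := hKsq (g (a0 + a0) - g a0 * g a0)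
        have hcne : c ≠ 0 := by
          intro h0; exact haa0 (by rw [hc, h0, mul_zero])
        -- numerator-level facts about the "sine" function x ↦ (g (x+a0) - g x * g a0)/c
        have hp_mul : ∀ x y, (g (x + a0) - g x * g a0) * (g (y + a0) - g y * g a0) =
            (g (x + y) - g x * g y) * (c * c) := by
          intro x y
          have hr := hrank x a0 a0 y
          have cs : g (a0 + y) = g (y + a0) := congrArg g (add_comm _ _)
          rw [← hc]
          linear_combination hr - (g (x + a0) - g x * g a0) * cs
        have hp_add : ∀ x y, g (x + y + a0) - g (x + y) * g a0 =
            g x * (g (y + a0) - g y * g a0) + g y * (g (x + a0) - g x * g a0) := by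
          intro x y
          linear_combination hK x y a0
        refine ⟨fun x => g x + (g (x + a0) - g x * g a0) / c, fun x y => ?_, fun x => ?_⟩
        · dsimp only
          have e1 := hp_mul x y
          have e2 := hp_add x y
          have key : (g (x + a0) - g x * g a0) * (g (y + a0) - g y * g a0) / (c * c) =
              g (x + y) - g x * g y := by
            rw [e1, mul_div_assoc, div_self (mul_ne_zero hcne hcne), mul_one]
          linear_combination (1 / c) * e2 - key
        · dsimp only
          rw [eq_div_iff hK2, hgσ x, hstar x a0]
          have hnum : g (x + σ a0) = 2 * g x * g a0 - g (x + a0) := by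
            linear_combination hE x a0
          rw [hnum]
          ring
  · rintro ⟨m, hm, hg⟩ x y
    have h1 : σ (x + y) = σ x + σ y := hσadd x y
    have h2 : σ (x + σ y) = σ x + y := by rw [hσadd, hσinv]
    rw [hg (x + y), hg (x + σ y), hg x, hg y, h1, h2, hm, hm, hm, hm]
    field_simp
    ring
end

section
/- Let (S,+) be a commutative semigroup, G a 2-cancellative abelian group, and σ, τ : S → S two involutions. A function f : S² → G satisfies the Jensen type functional equation f(x+y, z+w) + f(x+σ(y), z+τ(w)) = 2 f(x,z) for all x, y, z, w ∈ S if and only if there exist a constant c ∈ G and an additive function a : S² → G with a(σ(x), τ(y)) = −a(x,y) for all x, y ∈ S, such that f(x,y) = a(x,y) + c for all x, y ∈ S. -/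
/-- the Jensen type equation on a commutative semigroup with two
involutions, valued in a 2-cancellative abelian group. -/
theorem jensen_type_general_solution
    {S G : Type*} [AddCommSemigroup S] [AddCommGroup G]
    (hG : ∀ g h : G, g + g = h + h → g = h)
    (σ τ : S → S)
    (hσinv : ∀ x, σ (σ x) = x) (hσadd : ∀ x y, σ (x + y) = σ x + σ y)
    (hτinv : ∀ x, τ (τ x) = x) (hτadd : ∀ x y, τ (x + y) = τ x + τ y)
    (f : S → S → G) :
    (∀ x y z w, f (x + y) (z + w) + f (x + σ y) (z + τ w) = 2 • f x z) ↔
    ∃ (c : G) (a : S → S → G),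
      (∀ x y z w, a (x + y) (z + w) = a x z + a y w) ∧
      (∀ x y, a (σ x) (τ y) = - a x y) ∧
      (∀ x y, f x y = a x y + c) := by
  constructor
  · intro hf
    simp only [two_smul] at hf
    rcases isEmpty_or_nonempty S with hS | ⟨⟨s⟩⟩
    · exact ⟨0, fun _ _ => 0, fun x => hS.elim x, fun x => hS.elim x, fun x => hS.elim x⟩
    -- (5): translation by symmetric elements leaves f invariant
    have h5 : ∀ x z y w, f (x + (y + σ y)) (z + (w + τ w)) = f x z := by
      intro x z y w
      have h := hf x (y + σ y) z (w + τ w)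
      rw [hσadd, hτadd, hσinv, hτinv, add_comm (σ y) y, add_comm (τ w) w] at h
      exact hG _ _ h
    set c : G := f (s + σ s) (s + τ s) with hcdef
    -- P(x,z) := f (x+σx) (z+τz) is constant
    have hc : ∀ x z, f (x + σ x) (z + τ z) = c := by
      intro x z
      have h1 := h5 (x + σ x) (z + τ z) s s
      have h2 := h5 (s + σ s) (s + τ s) x z
      rw [add_comm (s + σ s) (x + σ x), add_comm (s + τ s) (z + τ z)] at h2
      rw [← h1, h2]
    -- (7): f x z + f (σ x) (τ z) = c + c
    have h7 : ∀ x z, f x z + f (σ x) (τ z) = c + c := by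
      intro x z
      have e1 := hf x (σ x) z (τ z)
      rw [hσinv, hτinv, hc] at e1
      have e2 := hf (σ x) x (τ z) z
      rw [add_comm (σ x) x, add_comm (τ z) z, hc] at e2
      have e3 := hf (x + σ x) (x + x) (z + τ z) (z + z)
      rw [hσadd, hτadd, hc] at e3
      rw [add_comm (x + σ x) (x + x), add_comm (z + τ z) (z + z),
          add_comm (x + σ x) (σ x + σ x), add_comm (z + τ z) (τ z + τ z),
          h5 (x + x) (z + z) x z, h5 (σ x + σ x) (τ z + τ z) x z] at e3
      apply hG
      calc (f x z + f (σ x) (τ z)) + (f x z + f (σ x) (τ z))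
          = (c + f (x + x) (z + z)) + (c + f (σ x + σ x) (τ z + τ z)) := by
            rw [e1, e2]; abel
        _ = (f (x + x) (z + z) + f (σ x + σ x) (τ z + τ z)) + (c + c) := by abel
        _ = (c + c) + (c + c) := by rw [e3]
    -- additivity of f up to c
    have hadd : ∀ x y z w, f (x + y) (z + w) + c = f x z + f y w := by
      intro x y z w
      have e1 := hf x y z w
      have e2 := hf y x w z
      rw [add_comm y x, add_comm w z] at e2
      have e3 := h7 (x + σ y) (z + τ w)
      rw [hσadd, hτadd, hσinv, hτinv, add_comm (σ x) y, add_comm (τ z) w] at e3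
      apply hG
      calc (f (x + y) (z + w) + c) + (f (x + y) (z + w) + c)
          = (f (x + y) (z + w) + f (x + σ y) (z + τ w))
            + (f (x + y) (z + w) + f (y + σ x) (w + τ z))
            - (f (x + σ y) (z + τ w) + f (y + σ x) (w + τ z)) + (c + c) := by abel
        _ = (f x z + f x z) + (f y w + f y w)
            - (f (x + σ y) (z + τ w) + f (y + σ x) (w + τ z)) + (c + c) := by
            rw [e1, e2]
        _ = (f x z + f y w) + (f x z + f y w) := by
            rw [show f (x + σ y) (z + τ w) + f (y + σ x) (w + τ z) = c + c from e3]
            abel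
    refine ⟨c, fun x y => f x y - c, ?_, ?_, ?_⟩
    · intro x y z w
      have := hadd x y z w
      simp only [sub_add_sub_comm]
      rw [← this]; abel
    · intro x y
      have := h7 x y
      have : f (σ x) (τ y) = c + c - f x y := by rw [← this]; abel
      show f (σ x) (τ y) - c = -(f x y - c)
      rw [this]; abel
    · intro x y; show f x y = f x y - c + c; abel
  · rintro ⟨c, a, haadd, hst, hfa⟩ x y z w
    rw [hfa, hfa, hfa, haadd, haadd, hst y w, two_smul]
    abel
end

section
/- Let (S,+) be a commutative semigroup, G a 2-cancellative abelian group, and σ, τ : S → S two involutions. If f : S² → G satisfies f(x+y, z+w) + f(x+σ(y), z+τ(w)) = 2 f(x,z) for all x, y, z, w ∈ S, then f(x+u+y, z+v+w) + f(x,z) = f(x+u, z+v) + f(x+y, z+w) for all x, y, z, u, v, w ∈ S. -/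
/-- a solution of the Jensen type equation satisfies the
quadrilateral identity. -/
theorem jensen_type_quadrilateral
    {S G : Type*} [AddCommSemigroup S] [AddCommGroup G]
    (hG : ∀ g h : G, g + g = h + h → g = h)
    (σ τ : S → S)
    (hσinv : ∀ x, σ (σ x) = x) (hσadd : ∀ x y, σ (x + y) = σ x + σ y)
    (hτinv : ∀ x, τ (τ x) = x) (hτadd : ∀ x y, τ (x + y) = τ x + τ y)
    (f : S → S → G)
    (hf : ∀ x y z w, f (x + y) (z + w) + f (x + σ y) (z + τ w) = 2 • f x z) :
    ∀ x y z u v w, f (x + u + y) (z + v + w) + f x z = f (x + u) (z + v) + f (x + y) (z + w) := by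
  intro x y z u v w
  have E1 := hf (x + u) y (z + v) w
  have E2 := hf (x + σ y) u (z + τ w) v
  have E3 := hf x y z w
  have E4 := hf x (u + y) z (v + w)
  rw [hσadd, hτadd] at E4
  simp only [two_nsmul] at E1 E2 E3 E4
  have hs1 : x + σ y + u = x + u + σ y := by
    rw [add_right_comm]
  have hs2 : z + τ w + v = z + v + τ w := by
    rw [add_right_comm]
  have hs3 : x + σ y + σ u = x + (σ u + σ y) := by
    rw [add_right_comm, add_assoc]
  have hs4 : z + τ w + τ v = z + (τ v + τ w) := by
    rw [add_right_comm, add_assoc]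
  rw [hs1, hs2, hs3, hs4] at E2
  set a := f (x + u + y) (z + v + w) with ha
  set b := f (x + u + σ y) (z + v + τ w) with hb
  set c := f (x + (σ u + σ y)) (z + (τ v + τ w)) with hc
  set d := f (x + σ y) (z + τ w) with hd
  set p := f x z with hp
  set q := f (x + u) (z + v) with hq
  set r := f (x + y) (z + w) with hr
  -- E1 : a + b = q + q, E2 : b + c = d + d, E3 : r + d = p + p, E4 : a + c = p + p
  have hE4 : a + c = p + p := by
    rw [ha, hc, hp, ← E4, add_assoc, add_assoc]
  apply hG
  have key : (a + p) + (a + p) + (b + c + (d + d))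
      = (q + r) + (q + r) + (b + c + (d + d)) := by
    calc (a + p) + (a + p) + (b + c + (d + d))
        = (a + b) + (a + c) + ((p + p) + (d + d)) := by abel
      _ = (q + q) + (p + p) + ((p + p) + (d + d)) := by rw [E1, hE4]
      _ = (q + q) + (r + d) + ((r + d) + (d + d)) := by rw [E3]
      _ = (q + r) + (q + r) + (d + d + (d + d)) := by abel
      _ = (q + r) + (q + r) + (b + c + (d + d)) := by rw [E2]
  exact add_right_cancel key
end

section
/- Let (S,+) be a commutative semigroup, G a 2-cancellative abelian group, and σ, τ : S → S two involutions. If f : S² → G satisfies f(x+y, z+w) + f(x+σ(y), z+τ(w)) = 2 f(x,z) for all x, y, z, w ∈ S, then the map (x,z) ↦ f(x+σ(x), z+τ(z)) is constant on S², i.e. f(x+σ(x), z+τ(z)) = f(y+σ(y), w+τ(w)) for all x, y, z, w ∈ S. -/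
/-- for a solution of the Jensen type equation, the map
(x,z) ↦ f(x+σ(x), z+τ(z)) is constant. -/
theorem jensen_type_constant_on_fixed_sums
    {S G : Type*} [AddCommSemigroup S] [AddCommGroup G]
    (hG : ∀ g h : G, g + g = h + h → g = h)
    (σ τ : S → S)
    (hσinv : ∀ x, σ (σ x) = x) (hσadd : ∀ x y, σ (x + y) = σ x + σ y)
    (hτinv : ∀ x, τ (τ x) = x) (hτadd : ∀ x y, τ (x + y) = τ x + τ y)
    (f : S → S → G)
    (hf : ∀ x y z w, f (x + y) (z + w) + f (x + σ y) (z + τ w) = 2 • f x z) :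
    ∀ x y z w, f (x + σ x) (z + τ z) = f (y + σ y) (w + τ w) := by
  have key : ∀ x y z w, f ((x + y) + σ (x + y)) ((z + w) + τ (z + w))
      = f (x + σ x) (z + τ z) := by
    intro x y z w
    apply hG
    have h := hf (x + σ x) (y + σ y) (z + τ z) (w + τ w)
    rw [two_nsmul] at h
    rw [← h]
    have e1 : (x + σ x) + (y + σ y) = (x + y) + σ (x + y) := by
      rw [hσadd]; ac_rfl
    have e2 : (z + τ z) + (w + τ w) = (z + w) + τ (z + w) := by
      rw [hτadd]; ac_rfl
    have e3 : (x + σ x) + σ (y + σ y) = (x + y) + σ (x + y) := by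
      rw [hσadd, hσinv, hσadd]; ac_rfl
    have e4 : (z + τ z) + τ (w + τ w) = (z + w) + τ (z + w) := by
      rw [hτadd, hτinv, hτadd]; ac_rfl
    rw [e1, e2, e3, e4]
  intro x y z w
  rw [← key x y z w, ← key y x w z, add_comm x y, add_comm z w]
end

section
/- Let (S,+) be a commutative semigroup, G a 2-cancellative abelian group, and σ : S → S an involution. A function g : S → G satisfies g(x+y) + g(x+σ(y)) = 2 g(x) for all x, y ∈ S if and only if there exist a constant a ∈ G and an additive function ψ : S → G with ψ(σ(x)) = −ψ(x) for all x ∈ S, such that g(x) = ψ(x) + a for all x ∈ S. -/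
/-- the classical Jensen equation with one involution. -/
theorem jensen_one_variable_general_solution
    {S G : Type*} [AddCommSemigroup S] [AddCommGroup G]
    (hG : ∀ g h : G, g + g = h + h → g = h)
    (σ : S → S)
    (hσinv : ∀ x, σ (σ x) = x) (hσadd : ∀ x y, σ (x + y) = σ x + σ y)
    (g : S → G) :
    (∀ x y, g (x + y) + g (x + σ y) = 2 • g x) ↔
    ∃ (a : G) (ψ : S → G),
      (∀ x y, ψ (x + y) = ψ x + ψ y) ∧
      (∀ x, ψ (σ x) = - ψ x) ∧
      (∀ x, g x = ψ x + a) := by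
  constructor
  · intro H
    by_cases hS : Nonempty S
    · obtain ⟨x₀⟩ := hS
      -- E(x) := g x + g (σ x) is constant
      have hE : ∀ x y : S, g x + g (σ x) = g y + g (σ y) := by
        intro x y
        apply hG
        have A := H x y
        have B := H (σ x) (σ y)
        rw [hσinv] at B
        have A' := H y x
        have B' := H (σ y) (σ x)
        rw [hσinv] at B'
        have h1 : (g x + g (σ x)) + (g x + g (σ x)) =
            (g (x + y) + g (x + σ y)) + (g (σ x + σ y) + g (σ x + y)) := by
          rw [A, B, two_smul, two_smul]; abel
        have h2 : (g y + g (σ y)) + (g y + g (σ y)) =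
            (g (y + x) + g (y + σ x)) + (g (σ y + σ x) + g (σ y + x)) := by
          rw [A', B', two_smul, two_smul]; abel
        rw [h1, h2, add_comm x y, add_comm x (σ y), add_comm (σ x) (σ y),
          add_comm (σ x) y]
        abel
      obtain ⟨k, hk⟩ : ∃ k : G, g x₀ + g (σ x₀) = k := ⟨_, rfl⟩
      have hEk : ∀ z : S, g z + g (σ z) = k := fun z => hk ▸ hE z x₀
      -- key: g (x + σ y) + g (y + σ x) = k
      have hK : ∀ x y : S, g (x + σ y) + g (y + σ x) = k := by
        intro x y
        have := hEk (x + σ y)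
        rw [hσadd, hσinv, add_comm (σ x) y] at this
        exact this
      obtain ⟨c, hc⟩ : ∃ c : G, g x₀ + g x₀ - g (x₀ + x₀) = c := ⟨_, rfl⟩
      -- k = c + c
      have hkc : k = c + c := by
        have A₀ := H x₀ x₀
        have hD : g (x₀ + σ x₀) + g (x₀ + σ x₀) = k := by
          have := hEk (x₀ + σ x₀)
          rw [hσadd, hσinv, add_comm (σ x₀) x₀] at this
          exact this
        rw [two_smul] at A₀
        have : g (x₀ + σ x₀) = g x₀ + g x₀ - g (x₀ + x₀) := by
          rw [← A₀]; abel
        rw [this] at hD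
        rw [← hc, ← hD]
      -- Cauchy-type equation
      have hCauchy : ∀ x y : S, g (x + y) = g x + g y - c := by
        intro x y
        apply hG
        have A := H x y
        have A' := H y x
        rw [add_comm y x] at A'
        have h5 : (g (x + y) + g (x + σ y)) + (g (x + y) + g (y + σ x)) =
            2 • g x + 2 • g y := by rw [A, A']
        calc g (x + y) + g (x + y)
            = ((g (x + y) + g (x + σ y)) + (g (x + y) + g (y + σ x)))
              - (g (x + σ y) + g (y + σ x)) := by abel
          _ = (2 • g x + 2 • g y) - (c + c) := by rw [h5, hK, ← hkc]
          _ = (g x + g y - c) + (g x + g y - c) := by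
              rw [two_smul, two_smul]; abel
      refine ⟨c, fun x => g x - c, ?_, ?_, ?_⟩
      · intro x y
        show g (x + y) - c = (g x - c) + (g y - c)
        rw [hCauchy]; abel
      · intro x
        have h := hEk x
        have h2 : g (σ x) = c + c - g x := by rw [← hkc, ← h]; abel
        show g (σ x) - c = -(g x - c)
        rw [h2]; abel
      · intro x
        show g x = (g x - c) + c
        abel
    · exact ⟨0, fun _ => 0, fun x _ => absurd ⟨x⟩ hS,
        fun x => absurd ⟨x⟩ hS, fun x => absurd ⟨x⟩ hS⟩
  · rintro ⟨a, ψ, hadd, hodd, hg⟩ x y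
    rw [hg, hg, hg, hadd, hadd, hodd, two_smul]
    abel
end

section
/- Let (S,+) be a commutative semigroup, G a 2-cancellative abelian group, and σ, τ : S → S two involutions. A function h : S² × S² → G satisfies h((x+y, z+w), (t,s)) + h((x+σ(y), z+τ(w)), (t,s)) = 2 h((x,z), (t,s)) for all x, y, z, w, t, s ∈ S if and only if there exist a function c : S² → G and a function a : S² × S² → G, additive in its first variable (i.e. a((x+y, z+w), (t,s)) = a((x,z), (t,s)) + a((y,w), (t,s)) for all x, y, z, w, t, s ∈ S) and satisfying a((σ(x), τ(y)), (t,s)) = −a((x,y), (t,s)) for all x, y, t, s ∈ S, such that h((x,y), (t,s)) = a((x,y), (t,s)) + c(t,s) for all x, y, t, s ∈ S. -/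
/-- Key lemma: the one-variable Jensen type equation with involution on a
commutative semigroup, solved relative to a chosen base point `u₀`. -/
private theorem jensen_key {T G : Type*} [AddCommSemigroup T] [AddCommGroup G]
    (hG : ∀ g h : G, g + g = h + h → g = h)
    (ρ : T → T) (hρinv : ∀ u, ρ (ρ u) = u) (hρadd : ∀ u v, ρ (u + v) = ρ u + ρ v)
    (f : T → G) (E : ∀ u v, f (u + v) + f (u + ρ v) = f u + f u)
    (u₀ : T) :
    (∀ u, f (ρ u) = (f (u₀ + ρ u₀) + f (u₀ + ρ u₀)) - f u) ∧
    (∀ u v, f (u + v) = f u + f v - f (u₀ + ρ u₀)) := by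
  -- f is invariant under adding v + ρ v
  have E' : ∀ u v, f (u + (v + ρ v)) = f u := by
    intro u v
    have h1 := E u (v + ρ v)
    rw [hρadd, hρinv, add_comm (ρ v) v] at h1
    exact hG _ _ h1
  -- f (u + ρ u) is constant
  have const : ∀ u, f (u + ρ u) = f (u₀ + ρ u₀) := by
    intro u
    have h1 : f ((u₀ + ρ u₀) + (u + ρ u)) = f (u₀ + ρ u₀) := E' _ _
    have h2 : f ((u + ρ u) + (u₀ + ρ u₀)) = f (u + ρ u) := E' _ _
    rw [add_comm] at h1
    rw [h1] at h2
    exact h2.symm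
  set c := f (u₀ + ρ u₀) with hc
  -- oddness: f u + f (ρ u) = 2 c
  have odd2 : ∀ u, f u + f (ρ u) = c + c := by
    intro u
    have h1 := E (u + ρ u) u
    have e1 : u + ρ u + u = u + (u + ρ u) := by
      rw [add_assoc, add_comm (ρ u) u]
    have e2 : u + ρ u + ρ u = ρ u + (u + ρ u) := add_comm _ _
    rw [e1, e2, E', E', const u] at h1
    exact h1
  -- cross identity : f (u + ρ v) = f u - f v + c
  have cross : ∀ u v, f (u + ρ v) = f u - f v + c := by
    intro u v
    have h1 := odd2 (u + ρ v)
    rw [hρadd, hρinv] at h1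
    -- h1 : f (u + ρ v) + f (ρ u + v) = c + c
    have h2 := E u v
    have h3 := E v u
    rw [add_comm v u] at h3
    -- h2 : f (u + v) + f (u + ρ v) = f u + f u
    -- h3 : f (u + v) + f (v + ρ u) = f v + f v
    apply hG
    have key : f (u + ρ v) + f (u + ρ v)
        = (f (u + ρ v) + f (ρ u + v))
          + ((f (u + v) + f (u + ρ v)) - (f (u + v) + f (v + ρ u))) := by
      rw [add_comm (ρ u) v]; abel
    rw [key, h1, h2, h3]
    abel
  -- additivity
  refine ⟨fun u => ?_, fun u v => ?_⟩
  · have h1 := odd2 u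
    exact eq_sub_of_add_eq' h1
  · have h2 := E u v
    rw [cross u v] at h2
    -- f (u + v) + (f u - f v + c) = f u + f u
    have : f (u + v) = f u + f u - (f u - f v + c) := by
      rw [← h2]; abel
    rw [this]; abel

/-- the parametrized Jensen type equation on S² × S². -/
theorem jensen_type_parametrized_general_solution
    {S G : Type*} [AddCommSemigroup S] [AddCommGroup G]
    (hG : ∀ g h : G, g + g = h + h → g = h)
    (σ τ : S → S)
    (hσinv : ∀ x, σ (σ x) = x) (hσadd : ∀ x y, σ (x + y) = σ x + σ y)
    (hτinv : ∀ x, τ (τ x) = x) (hτadd : ∀ x y, τ (x + y) = τ x + τ y)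
    (h : S × S → S × S → G) :
    (∀ x y z w t s, h (x + y, z + w) (t, s) + h (x + σ y, z + τ w) (t, s)
        = 2 • h (x, z) (t, s)) ↔
    ∃ (c : S × S → G) (a : S × S → S × S → G),
      (∀ x y z w t s, a (x + y, z + w) (t, s) = a (x, z) (t, s) + a (y, w) (t, s)) ∧
      (∀ x y t s, a (σ x, τ y) (t, s) = - a (x, y) (t, s)) ∧
      (∀ x y t s, h (x, y) (t, s) = a (x, y) (t, s) + c (t, s)) := by
  constructor
  · intro H
    set ρ : S × S → S × S := fun u => (σ u.1, τ u.2) with hρ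
    have hρinv : ∀ u, ρ (ρ u) = u := by
      intro u; simp [hρ, hσinv, hτinv]
    have hρadd : ∀ u v, ρ (u + v) = ρ u + ρ v := by
      intro u v; simp [hρ, hσadd, hτadd, Prod.ext_iff]
    -- for each parameter p, apply the key lemma to f := fun u => h u p
    have main : ∀ t s : S,
        (∀ u : S × S, h (ρ u) (t, s)
            = (h ((t, s) + ρ (t, s)) (t, s) + h ((t, s) + ρ (t, s)) (t, s))
              - h u (t, s)) ∧
        (∀ u v : S × S, h (u + v) (t, s)
            = h u (t, s) + h v (t, s) - h ((t, s) + ρ (t, s)) (t, s)) := by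
      intro t s
      refine jensen_key hG ρ hρinv hρadd (fun u => h u (t, s)) ?_ (t, s)
      intro u v
      have := H u.1 v.1 u.2 v.2 t s
      rw [two_nsmul] at this
      exact this
    refine ⟨fun p => h (p + ρ p) p,
      fun u p => h u p - h (p + ρ p) p, ?_, ?_, ?_⟩
    · intro x y z w t s
      have := (main t s).2 (x, z) (y, w)
      simp only [Prod.mk_add_mk] at this ⊢
      rw [this]; abel
    · intro x y t s
      have := (main t s).1 (x, y)
      simp only [hρ] at this ⊢
      rw [this]; abel
    · intro x y t s
      simp
  · rintro ⟨c, a, hadd, hodd, hrep⟩ x y z w t s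
    rw [hrep, hrep, hrep, hadd x y z w, hadd x (σ y) z (τ w), hodd, two_nsmul]
    abel
end

section
/- Let (S,+) be a commutative semigroup, H an abelian group uniquely divisible by 2, and σ, τ : S → S two involutions. A function f : S² → H satisfies the quadratic type functional equation f(x+y, z+w) + f(x+σ(y), z+τ(w)) = 2 f(x,z) + 2 f(y,w) for all x, y, z, w ∈ S if and only if there exist an additive function T : S² → H with T(σ(x), τ(z)) = T(x,z) for all x, z ∈ S, and a symmetric biadditive function B : S² × S² → H with B((σ(x), τ(z)), (y,w)) = −B((x,z), (y,w)) for all x, z, y, w ∈ S, such that f(u) = B(u,u) + T(u) for all u ∈ S². -/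
section Aux

variable {G H : Type*} [AddCommSemigroup G] [AddCommGroup H]

theorem aux_quad_type (hH : ∀ h : H, ∃! g : H, g + g = h)
    (ρ : G → G) (hρinv : ∀ x, ρ (ρ x) = x) (hρadd : ∀ x y, ρ (x + y) = ρ x + ρ y)
    (f : G → H)
    (hf : ∀ u v, f (u + v) + f (u + ρ v) = 2 • f u + 2 • f v) :
    ∃ (T : G → H) (B : G → G → H),
      (∀ u v, T (u + v) = T u + T v) ∧ (∀ u, T (ρ u) = T u) ∧
      (∀ u v, B u v = B v u) ∧ (∀ u v r, B (u + v) r = B u r + B v r) ∧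
      (∀ u v, B (ρ u) v = - B u v) ∧ (∀ u, f u = B u u + T u) := by
  classical
  have cancel2 : ∀ a b : H, a + a = b + b → a = b := fun a b h => (hH (b + b)).unique h rfl
  set half : H → H := fun h => (hH h).choose with hhalf
  have half_spec : ∀ h : H, half h + half h = h := fun h => (hH h).choose_spec.1
  have half_add : ∀ a b : H, half (a + b) = half a + half b := by
    intro a b
    apply cancel2
    rw [half_spec, add_add_add_comm, half_spec, half_spec]
  have half_neg : ∀ a : H, half (-a) = - half a := by
    intro a
    apply cancel2
    rw [half_spec, ← neg_add, half_spec]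
  -- f is ρ-invariant
  have finv : ∀ v, f (ρ v) = f v := by
    intro v
    have h1 := hf v v
    have h2 := hf v (ρ v)
    rw [hρinv] at h2
    apply cancel2
    have key : 2 • f v + 2 • f (ρ v) = 2 • f v + 2 • f v := by
      rw [← h1, ← h2]; abel
    have := add_left_cancel key
    rw [two_nsmul, two_nsmul] at this
    exact this
  -- Fréchet-type identity
  have key : ∀ u v r : G, f (u + v + r) + (f u + f v + f r)
      = f (u + v) + f (u + r) + f (v + r) := by
    intro u v r
    have e1 := hf (u + v) r
    have e2 := hf (u + ρ r) v
    have e3 := hf u (v + r)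
    have e4 := hf u r
    have harg1 : u + ρ r + v = u + v + ρ r := add_right_comm _ _ _
    have harg2 : u + ρ r + ρ v = u + ρ (v + r) := by
      rw [hρadd, add_assoc, add_comm (ρ v) (ρ r), ← add_assoc]
    have harg3 : u + (v + r) = u + v + r := (add_assoc _ _ _).symm
    rw [harg1, harg2] at e2
    rw [harg3] at e3
    apply cancel2
    linear_combination (norm := abel1) e1 - e2 + e3 - e4 - e4
  set ψ : G → G → H := fun u v => f (u + v) - f u - f v with hψ
  have ψsymm : ∀ u v, ψ u v = ψ v u := by
    intro u v; simp only [hψ]; rw [add_comm u v]; abel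
  have ψbiadd : ∀ u v r, ψ (u + v) r = ψ u r + ψ v r := by
    intro u v r
    simp only [hψ]
    linear_combination (norm := abel1) key u v r
  have ψneg : ∀ u v, ψ u (ρ v) = - ψ u v := by
    intro u v
    have := hf u v
    simp only [hψ, finv]
    linear_combination (norm := abel1) this
  have ψneg' : ∀ u v, ψ (ρ u) v = - ψ u v := by
    intro u v
    rw [ψsymm, ψneg, ψsymm]
  set B : G → G → H := fun u v => half (ψ u v) with hB
  have hBuv2 : ∀ u v, B u v + B u v = ψ u v := fun u v => half_spec _
  have Bsymm : ∀ u v, B u v = B v u := fun u v => congrArg half (ψsymm u v)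
  have Badd : ∀ u v r, B (u + v) r = B u r + B v r := by
    intro u v r
    simp only [hB]
    rw [ψbiadd, half_add]
  have Bneg : ∀ u v, B (ρ u) v = - B u v := by
    intro u v
    simp only [hB]
    rw [ψneg', half_neg]
  have Badd2 : ∀ u v r, B u (v + r) = B u v + B u r := by
    intro u v r
    rw [Bsymm, Badd, Bsymm v u, Bsymm r u]
  set T : G → H := fun u => f u - B u u with hT
  refine ⟨T, B, ?_, ?_, Bsymm, Badd, Bneg, ?_⟩
  · intro u v
    simp only [hT]
    have h1 : B (u + v) (u + v) = B u u + B u v + (B v u + B v v) := by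
      rw [Badd, Badd2, Badd2]
    have h2 : f (u + v) = ψ u v + f u + f v := by
      simp only [hψ]; abel
    rw [h1, h2, ← hBuv2 u v, Bsymm v u]
    abel
  · intro u
    simp only [hT]
    have : B (ρ u) (ρ u) = B u u := by
      rw [Bneg, Bsymm, Bneg, neg_neg]
    rw [this, finv]
  · intro u
    simp only [hT]
    abel

end Aux

/-- the quadratic type equation on a commutative semigroup with
two involutions, valued in an abelian group uniquely divisible by 2. -/
theorem quadratic_type_general_solution
    {S H : Type*} [AddCommSemigroup S] [AddCommGroup H]
    (hH : ∀ h : H, ∃! g : H, g + g = h)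
    (σ τ : S → S)
    (hσinv : ∀ x, σ (σ x) = x) (hσadd : ∀ x y, σ (x + y) = σ x + σ y)
    (hτinv : ∀ x, τ (τ x) = x) (hτadd : ∀ x y, τ (x + y) = τ x + τ y)
    (f : S × S → H) :
    (∀ x y z w, f (x + y, z + w) + f (x + σ y, z + τ w) = 2 • f (x, z) + 2 • f (y, w)) ↔
    ∃ (T : S × S → H) (B : S × S → S × S → H),
      (∀ u v : S × S, T (u + v) = T u + T v) ∧
      (∀ x z, T (σ x, τ z) = T (x, z)) ∧
      (∀ u v : S × S, B u v = B v u) ∧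
      (∀ u v r : S × S, B (u + v) r = B u r + B v r) ∧
      (∀ x z y w, B (σ x, τ z) (y, w) = - B (x, z) (y, w)) ∧
      (∀ u : S × S, f u = B u u + T u) := by
  constructor
  · intro hf
    obtain ⟨T, B, h1, h2, h3, h4, h5, h6⟩ :=
      aux_quad_type hH (fun p : S × S => (σ p.1, τ p.2))
        (by intro p; simp [hσinv, hτinv])
        (by intro p q; simp [hσadd, hτadd, Prod.ext_iff])
        f
        (by intro u v; exact hf u.1 v.1 u.2 v.2)
    exact ⟨T, B, h1, fun x z => h2 (x, z), h3, h4, fun x z y w => h5 (x, z) (y, w), h6⟩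
  · rintro ⟨T, B, hT, hTi, hBs, hBa, hBi, hfB⟩ x y z w
    have hBa2 : ∀ u v r : S × S, B u (v + r) = B u v + B u r := by
      intro u v r
      rw [hBs, hBa, hBs v u, hBs r u]
    have hBi2 : ∀ (u : S × S) (a b : S), B u (σ a, τ b) = - B u (a, b) := by
      intro u a b
      rw [hBs, hBi, hBs]
    have h1 : ((x + y, z + w) : S × S) = (x, z) + (y, w) := rfl
    have h2 : ((x + σ y, z + τ w) : S × S) = (x, z) + (σ y, τ w) := rfl
    rw [h1, h2, hfB, hfB, hfB, hfB]
    rw [hT, hT, hTi, hBa, hBa2, hBa2, hBa, hBa2, hBa2]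
    rw [hBi y w, hBi2, hBi2, hBi y w, neg_neg]
    rw [hBs (y, w) (x, z)]
    abel
end

section
/- Let (S,+) be a commutative semigroup, H an abelian group uniquely divisible by 2, and σ, τ : S → S two involutions. If f : S² → H satisfies f(x+y, z+w) + f(x+σ(y), z+τ(w)) = 2 f(x,z) + 2 f(y,w) for all x, y, z, w ∈ S, then f(σ(y), τ(w)) = f(y,w) for all y, w ∈ S, and consequently f(x+σ(y), z+τ(w)) = f(σ(x)+y, τ(z)+w) for all x, y, z, w ∈ S. -/
/-- a quadratic type solution is invariant under the pair of
involutions, and the resulting symmetry of shifted arguments holds. -/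
theorem quadratic_type_involution_invariant
    {S H : Type*} [AddCommSemigroup S] [AddCommGroup H]
    (hH : ∀ h : H, ∃! g : H, g + g = h)
    (σ τ : S → S)
    (hσinv : ∀ x, σ (σ x) = x) (hσadd : ∀ x y, σ (x + y) = σ x + σ y)
    (hτinv : ∀ x, τ (τ x) = x) (hτadd : ∀ x y, τ (x + y) = τ x + τ y)
    (f : S × S → H)
    (hf : ∀ x y z w, f (x + y, z + w) + f (x + σ y, z + τ w) = 2 • f (x, z) + 2 • f (y, w)) :
    (∀ y w, f (σ y, τ w) = f (y, w)) ∧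
    (∀ x y z w, f (x + σ y, z + τ w) = f (σ x + y, τ z + w)) := by
  have key : ∀ y w, f (σ y, τ w) = f (y, w) := by
    intro y w
    have h1 := hf y y (τ w) w
    have h2 := hf y (σ y) (τ w) (τ w)
    rw [hσinv, hτinv] at h2
    have h4 : 2 • f (y, w) = 2 • f (σ y, τ w) :=
      (add_left_cancel (h1 ▸ h2 ▸ (add_comm (f (y + σ y, τ w + τ w)) (f (y + y, τ w + w))))).symm
    obtain ⟨g, hg, hu⟩ := hH (2 • f (y, w))
    have e1 : f (y, w) = g := hu _ (by simp [two_nsmul])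
    have e2 : f (σ y, τ w) = g := hu _ (by have := h4; simp [two_nsmul] at this; simp [two_nsmul, ← this])
    rw [e1, e2]
  refine ⟨key, fun x y z w => ?_⟩
  have := key (x + σ y) (z + τ w)
  rw [hσadd, hτadd, hσinv, hτinv] at this
  rw [← this]
end

section
/- Let (S,+) be a commutative semigroup, H an abelian group uniquely divisible by 2, and σ, τ : S → S two involutions. If f : S² → H satisfies f(x+y, z+w) + f(x+σ(y), z+τ(w)) = 2 f(x,z) + 2 f(y,w) for all x, y, z, w ∈ S, then the function h : S² × S² → H defined by h((x,z), (t,s)) = (1/4)(f(x+t, z+s) − f(x+σ(t), z+τ(s))) satisfies the Jensen type equation h((x+y, z+w), (t,s)) + h((x+σ(y), z+τ(w)), (t,s)) = 2 h((x,z), (t,s)) for all x, y, z, w, t, s ∈ S. -/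
/-- the function h((x,z),(t,s)) = (1/4)(f(x+t,z+s) − f(x+σ(t),z+τ(s)))
built from a quadratic type solution satisfies the Jensen type equation. -/
theorem quadratic_type_h_satisfies_jensen
    {S H : Type*} [AddCommSemigroup S] [AddCommGroup H]
    (hH : ∀ h : H, ∃! g : H, g + g = h)
    (half : H → H) (hhalf : ∀ h : H, half h + half h = h)
    (σ τ : S → S)
    (hσinv : ∀ x, σ (σ x) = x) (hσadd : ∀ x y, σ (x + y) = σ x + σ y)
    (hτinv : ∀ x, τ (τ x) = x) (hτadd : ∀ x y, τ (x + y) = τ x + τ y)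
    (f : S × S → H)
    (hf : ∀ x y z w, f (x + y, z + w) + f (x + σ y, z + τ w) = 2 • f (x, z) + 2 • f (y, w))
    (h : S × S → S × S → H)
    (hdef : ∀ x z t s,
      h (x, z) (t, s) = half (half (f (x + t, z + s) - f (x + σ t, z + τ s)))) :
    ∀ x y z w t s,
      h (x + y, z + w) (t, s) + h (x + σ y, z + τ w) (t, s) = 2 • h (x, z) (t, s) := by
  intro x y z w t s
  -- uniqueness of halves
  have huniq : ∀ a b : H, a + a = b + b → a = b := by
    intro a b hab
    obtain ⟨g, -, hg⟩ := hH (b + b)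
    exact (hg a hab).trans (hg b rfl).symm
  have hadd : ∀ a b : H, half (a + b) = half a + half b := by
    intro a b
    apply huniq
    rw [hhalf, add_add_add_comm, hhalf, hhalf]
  have hhalf2 : ∀ a : H, half (a + a) = a := fun a => huniq _ _ (by rw [hhalf])
  -- key consequences of hf
  have hA := hf (x + t) y (z + s) w
  have hB := hf (x + σ t) y (z + τ s) w
  rw [show x + t + y = x + y + t from by ac_rfl,
      show z + s + w = z + w + s from by ac_rfl,
      show x + t + σ y = x + σ y + t from by ac_rfl,
      show z + s + τ w = z + τ w + s from by ac_rfl] at hA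
  rw [show x + σ t + y = x + y + σ t from by ac_rfl,
      show z + τ s + w = z + w + τ s from by ac_rfl,
      show x + σ t + σ y = x + σ y + σ t from by ac_rfl,
      show z + τ s + τ w = z + τ w + τ s from by ac_rfl] at hB
  rw [hdef, hdef, hdef, two_smul, hhalf (half _), ← hadd, ← hadd]
  congr 1
  have key : (f (x + y + t, z + w + s) - f (x + y + σ t, z + w + τ s)) +
      (f (x + σ y + t, z + τ w + s) - f (x + σ y + σ t, z + τ w + τ s)) =
      (f (x + t, z + s) - f (x + σ t, z + τ s)) +
      (f (x + t, z + s) - f (x + σ t, z + τ s)) := by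
    have : (f (x + y + t, z + w + s) + f (x + σ y + t, z + τ w + s)) -
        (f (x + y + σ t, z + w + τ s) + f (x + σ y + σ t, z + τ w + τ s)) =
        (2 • f (x + t, z + s) + 2 • f (y, w)) -
        (2 • f (x + σ t, z + τ s) + 2 • f (y, w)) := by rw [hA, hB]
    rw [two_smul, two_smul] at this
    calc _ = (f (x + y + t, z + w + s) + f (x + σ y + t, z + τ w + s)) -
        (f (x + y + σ t, z + w + τ s) + f (x + σ y + σ t, z + τ w + τ s)) := by abel
      _ = _ := by rw [this]; abel
  rw [key, hhalf2]
end

section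
/- Let (S,+) be a commutative semigroup, H an abelian group uniquely divisible by 2, and σ, τ : S → S two involutions. If f : S² → H satisfies f(x+y, z+w) + f(x+σ(y), z+τ(w)) = 2 f(x,z) + 2 f(y,w) for all x, y, z, w ∈ S, then the function h : S² × S² → H defined by h((x,z), (t,s)) = (1/4)(f(x+t, z+s) − f(x+σ(t), z+τ(s))) satisfies h(u,r) = h(r,u) for all u, r ∈ S² and h((σ(x), τ(z)), r) = −h((x,z), r) for all x, z ∈ S and r ∈ S². -/
/-- the function h built from a quadratic type solution is
symmetric and odd in its first variable with respect to the involutions. -/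
theorem quadratic_type_h_symmetric_and_odd
    {S H : Type*} [AddCommSemigroup S] [AddCommGroup H]
    (hH : ∀ h : H, ∃! g : H, g + g = h)
    (half : H → H) (hhalf : ∀ h : H, half h + half h = h)
    (σ τ : S → S)
    (hσinv : ∀ x, σ (σ x) = x) (hσadd : ∀ x y, σ (x + y) = σ x + σ y)
    (hτinv : ∀ x, τ (τ x) = x) (hτadd : ∀ x y, τ (x + y) = τ x + τ y)
    (f : S × S → H)
    (hf : ∀ x y z w, f (x + y, z + w) + f (x + σ y, z + τ w) = 2 • f (x, z) + 2 • f (y, w))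
    (h : S × S → S × S → H)
    (hdef : ∀ x z t s,
      h (x, z) (t, s) = half (half (f (x + t, z + s) - f (x + σ t, z + τ s)))) :
    (∀ u r : S × S, h u r = h r u) ∧
    (∀ (x z : S) (r : S × S), h (σ x, τ z) r = - h (x, z) r) := by
  have twoc : ∀ a b : H, a + a = b + b → a = b := by
    intro a b hab
    obtain ⟨g, -, hu⟩ := hH (b + b)
    rw [hu a hab, hu b rfl]
  have finv : ∀ y w, f (σ y, τ w) = f (y, w) := by
    intro y w
    have h1 := hf (σ y) y (τ w) w
    have h2 := hf (σ y) (σ y) (τ w) (τ w)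
    rw [hσinv, hτinv] at h2
    rw [add_comm (f (σ y + y, τ w + w)) _] at h1
    have := h1.symm.trans h2
    have h3 : 2 • f (y, w) = 2 • f (σ y, τ w) := by
      exact add_left_cancel this
    rw [two_smul, two_smul] at h3
    exact (twoc _ _ h3).symm
  have halfneg : ∀ a : H, half (-a) = - half a := by
    intro a
    apply twoc
    rw [hhalf, ← neg_add, hhalf]
  have key : ∀ x z t s : S, f (x + σ t, z + τ s) = f (t + σ x, s + τ z) := by
    intro x z t s
    rw [← finv (x + σ t) (z + τ s), hσadd, hτadd, hσinv, hτinv,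
      add_comm (σ x) t, add_comm (τ z) s]
  constructor
  · rintro ⟨x, z⟩ ⟨t, s⟩
    rw [hdef, hdef, add_comm x t, add_comm z s, key]
  · rintro x z ⟨t, s⟩
    rw [hdef, hdef]
    have e1 : f (σ x + t, τ z + s) = f (x + σ t, z + τ s) := by
      rw [← finv (σ x + t) (τ z + s), hσadd, hτadd, hσinv, hτinv]
    have e2 : f (σ x + σ t, τ z + τ s) = f (x + t, z + s) := by
      rw [← hσadd, ← hτadd, finv]
    rw [e1, e2, ← neg_sub, halfneg, halfneg]
end

section
/- Let (S,+) be a commutative semigroup, H an abelian group uniquely divisible by 2, and σ, τ : S → S two involutions. If f : S² → H satisfies f(x+y, z+w) + f(x+σ(y), z+τ(w)) = 2 f(x,z) + 2 f(y,w) for all x, y, z, w ∈ S, then the function T : S² → H defined by T(x,z) = (1/2) f(x+σ(x), z+τ(z)) is additive, i.e. T(x+y, z+w) = T(x,z) + T(y,w) for all x, y, z, w ∈ S, and satisfies T(σ(x), τ(z)) = T(x,z) for all x, z ∈ S. -/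
/-- the function T(x,z) = (1/2) f(x+σ(x), z+τ(z)) built from a
quadratic type solution is additive and invariant under the involutions. -/
theorem quadratic_type_T_additive
    {S H : Type*} [AddCommSemigroup S] [AddCommGroup H]
    (hH : ∀ h : H, ∃! g : H, g + g = h)
    (half : H → H) (hhalf : ∀ h : H, half h + half h = h)
    (σ τ : S → S)
    (hσinv : ∀ x, σ (σ x) = x) (hσadd : ∀ x y, σ (x + y) = σ x + σ y)
    (hτinv : ∀ x, τ (τ x) = x) (hτadd : ∀ x y, τ (x + y) = τ x + τ y)
    (f : S × S → H)
    (hf : ∀ x y z w, f (x + y, z + w) + f (x + σ y, z + τ w) = 2 • f (x, z) + 2 • f (y, w))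
    (T : S × S → H)
    (hTdef : ∀ x z, T (x, z) = half (f (x + σ x, z + τ z))) :
    (∀ x y z w, T (x + y, z + w) = T (x, z) + T (y, w)) ∧
    (∀ x z, T (σ x, τ z) = T (x, z)) := by
  -- uniqueness of halves
  have huniq : ∀ a b : H, a + a = b + b → a = b := by
    intro a b h
    obtain ⟨g, -, hg⟩ := hH (b + b)
    exact (hg a h).trans (hg b rfl).symm
  have half_add : ∀ a b : H, half (a + b) = half a + half b := by
    intro a b
    apply huniq
    rw [hhalf]
    have := hhalf a
    have := hhalf b
    rw [add_add_add_comm, hhalf, hhalf]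
  constructor
  · intro x y z w
    -- key identity
    have key := hf (x + σ x) (y + σ y) (z + τ z) (w + τ w)
    have e1 : x + σ x + σ (y + σ y) = x + σ x + (y + σ y) := by
      rw [hσadd, hσinv]; congr 1; exact add_comm _ _
    have e2 : z + τ z + τ (w + τ w) = z + τ z + (w + τ w) := by
      rw [hτadd, hτinv]; congr 1; exact add_comm _ _
    rw [e1, e2] at key
    have hmain : f (x + σ x + (y + σ y), z + τ z + (w + τ w))
        = f (x + σ x, z + τ z) + f (y + σ y, w + τ w) := by
      apply huniq
      rw [key, two_nsmul, two_nsmul]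
      abel
    have harg : x + y + σ (x + y) = x + σ x + (y + σ y) := by
      rw [hσadd]
      show x + y + (σ x + σ y) = _
      ac_rfl
    have harg2 : z + w + τ (z + w) = z + τ z + (w + τ w) := by
      rw [hτadd]
      show z + w + (τ z + τ w) = _
      ac_rfl
    rw [hTdef, hTdef, hTdef, harg, harg2, hmain, half_add]
  · intro x z
    rw [hTdef, hTdef, hσinv, hτinv, add_comm (σ x) x, add_comm (τ z) z]
end

section
/- Let (S,+) be a commutative semigroup, H an abelian group uniquely divisible by 2, and σ : S → S an involution. A function g : S → H satisfies g(x+y) + g(x+σ(y)) = 2 g(x) + 2 g(y) for all x, y ∈ S if and only if there exist an additive function ψ : S → H with ψ(σ(x)) = ψ(x) for all x ∈ S, and a symmetric biadditive function b : S × S → H with b(σ(x), y) = −b(x,y) for all x, y ∈ S, such that g(x) = b(x,x) + ψ(x) for all x ∈ S. -/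
/-- the classical quadratic equation with one involution. -/
theorem quadratic_one_variable_general_solution
    {S H : Type*} [AddCommSemigroup S] [AddCommGroup H]
    (hH : ∀ h : H, ∃! g : H, g + g = h)
    (σ : S → S)
    (hσinv : ∀ x, σ (σ x) = x) (hσadd : ∀ x y, σ (x + y) = σ x + σ y)
    (g : S → H) :
    (∀ x y, g (x + y) + g (x + σ y) = 2 • g x + 2 • g y) ↔
    ∃ (ψ : S → H) (b : S → S → H),
      (∀ x y, ψ (x + y) = ψ x + ψ y) ∧
      (∀ x, ψ (σ x) = ψ x) ∧
      (∀ x y, b x y = b y x) ∧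
      (∀ x y z, b (x + y) z = b x z + b y z) ∧
      (∀ x y, b (σ x) y = - b x y) ∧
      (∀ x, g x = b x x + ψ x) := by
  have cancel2 : ∀ a b : H, a + a = b + b → a = b := by
    intro a b h
    exact (hH (b + b)).unique h rfl
  constructor
  · intro hE
    classical
    simp only [two_nsmul] at hE
    -- g is σ-invariant
    have hginv : ∀ x, g (σ x) = g x := by
      intro x
      refine cancel2 _ _ ?_
      have A := hE x x
      have B := hE x (σ x)
      rw [hσinv] at B
      have h : (g x + g x) + (g (σ x) + g (σ x)) = (g x + g x) + (g x + g x) := by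
        rw [← B, ← A]; abel
      exact add_left_cancel h
    have hswap : ∀ a c : S, g (a + σ c) = g (σ a + c) := by
      intro a c
      have h := hginv (σ a + c)
      rw [hσadd, hσinv] at h
      exact h
    set D : S → S → H := fun a c => g (a + c) - g (a + σ c) with hD
    have hDsymm : ∀ a c, D a c = D c a := by
      intro a c
      simp only [hD]
      rw [add_comm c a, hswap c a, add_comm (σ c) a]
    have hDσ : ∀ a c, D (σ a) c = - D a c := by
      intro a c
      simp only [hD]
      rw [← hswap a c, ← hσadd, hginv]
      abel
    have key : ∀ x y z, D (x + y) z - D (x + σ y) z = D y z + D y z := by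
      intro x y z
      have A := hE x (y + z)
      have B := hE x (y + σ z)
      rw [hσadd] at A
      rw [hσadd, hσinv] at B
      simp only [hD]
      simp only [add_assoc]
      have hAB : (g (x + (y + z)) + g (x + (σ y + σ z)))
            - (g (x + (y + σ z)) + g (x + (σ y + z)))
          = ((g x + g x) + (g (y + z) + g (y + z)))
            - ((g x + g x) + (g (y + σ z) + g (y + σ z))) := by
        rw [A, B]
      refine Eq.trans ?_ (Eq.trans hAB ?_) <;> abel
    have hDadd : ∀ x y z, D (x + y) z = D x z + D y z := by
      intro x y z
      have e1 := key x y z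
      have e2 := key y x z
      rw [add_comm y x] at e2
      have e3 : D (y + σ x) z = - D (x + σ y) z := by
        have h4 : σ (σ y + x) = y + σ x := by rw [hσadd, hσinv]
        rw [← h4, hDσ, add_comm (σ y) x]
      rw [e3] at e2
      refine cancel2 _ _ ?_
      refine Eq.trans ?_ (Eq.trans (congrArg₂ (· + ·) e1 e2) ?_) <;> abel
    -- halving
    choose half hhalf using fun h : H => (hH h).exists
    have half_uniq : ∀ (h a : H), a + a = h → a = half h := by
      intro h a ha
      exact cancel2 a (half h) (by rw [ha, hhalf])
    have half_add : ∀ u v : H, half (u + v) = half u + half v := by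
      intro u v
      refine (half_uniq _ _ ?_).symm
      calc (half u + half v) + (half u + half v)
          = (half u + half u) + (half v + half v) := by abel
        _ = u + v := by rw [hhalf, hhalf]
    have half_neg : ∀ u : H, half (-u) = - half u := by
      intro u
      refine (half_uniq _ _ ?_).symm
      calc (-half u) + (-half u) = -(half u + half u) := by abel
        _ = -u := by rw [hhalf]
    set b : S → S → H := fun a c => half (half (D a c)) with hb
    have hb2 : ∀ a c, b a c + b a c = half (D a c) := by
      intro a c
      simp only [hb]
      exact hhalf _
    have hbsymm : ∀ a c, b a c = b c a := by
      intro a c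
      simp only [hb, hDsymm a c]
    have hbadd : ∀ x y z, b (x + y) z = b x z + b y z := by
      intro x y z
      simp only [hb]
      rw [hDadd, half_add, half_add]
    have hbσ : ∀ a c, b (σ a) c = - b a c := by
      intro a c
      simp only [hb]
      rw [hDσ, half_neg, half_neg]
    have hbσσ : ∀ x, b (σ x) (σ x) = b x x := by
      intro x
      rw [hbσ x (σ x), hbsymm x (σ x), hbσ x x, neg_neg]
    have hkey2 : ∀ x y, g (x + y) = (g x + g y) + half (D x y) := by
      intro x y
      refine cancel2 _ _ ?_
      have hA := hE x y
      calc g (x + y) + g (x + y)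
          = ((g x + g x) + (g y + g y)) + (g (x + y) - g (x + σ y)) := by
            rw [← hA]; abel
        _ = ((g x + g x) + (g y + g y)) + D x y := by simp only [hD]
        _ = ((g x + g x) + (g y + g y)) + (half (D x y) + half (D x y)) := by
            rw [hhalf]
        _ = ((g x + g y) + half (D x y)) + ((g x + g y) + half (D x y)) := by abel
    refine ⟨fun x => g x - b x x, b, ?_, ?_, hbsymm, hbadd, hbσ, ?_⟩
    · intro x y
      have h1 : b (x + y) (x + y) = (b x x + b y y) + (b x y + b x y) := by
        rw [hbadd x y (x + y), hbsymm x (x + y), hbsymm y (x + y),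
          hbadd x y x, hbadd x y y, hbsymm y x]
        abel
      show g (x + y) - b (x + y) (x + y) = (g x - b x x) + (g y - b y y)
      rw [hkey2, h1, hb2]
      abel
    · intro x
      show g (σ x) - b (σ x) (σ x) = g x - b x x
      rw [hginv, hbσσ]
    · intro x
      show g x = b x x + (g x - b x x)
      abel
  · rintro ⟨ψ, b, hψadd, hψσ, hbsymm, hbadd, hbσ, hgb⟩
    intro x y
    have hbadd' : ∀ a c d, b a (c + d) = b a c + b a d := by
      intro a c d
      rw [hbsymm, hbadd, hbsymm c a, hbsymm d a]
    have hbσ' : ∀ a c, b a (σ c) = - b a c := by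
      intro a c
      rw [hbsymm, hbσ, hbsymm]
    simp only [hgb, hψadd, hψσ, hbadd, hbadd', hbσ, hbσ', neg_neg, two_nsmul]
    abel
end
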